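/- Let n = mk, 0 < p₁ < 1 < p₂, ε ∈ (0,1) with ε·m a positive integer. Then the number of integer vectors r = (r₀,…,r_m) with r₀ = 0 < r₁ < … < r_m = n such that card{i : kp₁ ≤ r_i − r_{i−1} ≤ kp₂} ≥ (1−ε)m is at most ( (⌊(p₂−p₁)k⌋ + 1) · (ek/ε)^ε · exp(H_e(ε)) )^m. -/

import Mathlib

/-!
Call block `i` of `r` exceptional if its length `r (i+1) - r i` lies outside
`G = [⌈k p₁⌉, ⌊k p₂⌋]`; a counted `r` has at most `j = ε m` exceptional blocks, so they fit in a
`j`-set `S` of blocks. Then `r` is determined by `S`, the lengths of the blocks outside `S` (each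
in `G`) and the `j`-set `{r (i+1) | i ∈ S} ⊆ [1, n]`, because for `i ∈ S` the endpoint `r (i+1)`
is the least element of that set above `r i`. Hence there are at most `C(m, j) · #G ^ m · C(n, j)`
such `r`, and `#G ≤ ⌊(p₂ - p₁) k⌋ + 1`, `C(m, εm) ≤ exp (H_e(ε) m)` (a single term of
`(ε + (1 - ε)) ^ m = 1`), `C(mk, εm) ≤ (e k / ε) ^ (ε m)` (from `j! ≥ (j / e) ^ j`).
-/

open MeasureTheory ProbabilityTheory Filter

noncomputable section

/-- Length of a longest common subsequence of two finite strings over an alphabet. -/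
def lcsLen {α : Type*} (x y : List α) : ℕ :=
  sSup {L | ∃ z : List α, z.length = L ∧ z.Sublist x ∧ z.Sublist y}

/-- The substring consisting of the letters `f_{a+1} … f_b` (1-based), i.e. the list
`[f a, f (a+1), …, f (b-1)]` (0-based), of a random sequence `f`. -/
def seg {Ω α : Type*} (f : ℕ → Ω → α) (a b : ℕ) (ω : Ω) : List α :=
  (List.range (b - a)).map fun j => f (a + j) ω

/-- Deterministic version of `seg`. -/
def segd {α : Type*} (f : ℕ → α) (a b : ℕ) : List α :=
  (List.range (b - a)).map fun j => f (a + j)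

/-- `LCₙ` : the length of the LCS of `X₁ … Xₙ` and `Y₁ … Yₙ`. -/
def LC {Ω α : Type*} (X Y : ℕ → Ω → α) (n : ℕ) (ω : Ω) : ℕ :=
  lcsLen (seg X 0 n ω) (seg Y 0 n ω)

/-- Deterministic version of `LC`. -/
def LCd {α : Type*} (x y : ℕ → α) (n : ℕ) : ℕ :=
  lcsLen (segd x 0 n) (segd y 0 n)

/-- `Lₙ(r)` : the best score of an alignment aligning `X_{k(i-1)+1} … X_{ki}` with
`Y_{r_{i-1}+1} … Y_{r_i}` for `i = 1, …, m`. -/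
def Lr {Ω α : Type*} (X Y : ℕ → Ω → α) (k m : ℕ) (r : ℕ → ℕ) (ω : Ω) : ℕ :=
  ∑ i ∈ Finset.range m,
    lcsLen (seg X (k * i) (k * (i + 1)) ω) (seg Y (r i) (r (i + 1)) ω)

/-- Deterministic version of `Lr`. -/
def Lrd {α : Type*} (x y : ℕ → α) (k m : ℕ) (r : ℕ → ℕ) : ℕ :=
  ∑ i ∈ Finset.range m,
    lcsLen (segd x (k * i) (k * (i + 1))) (segd y (r i) (r (i + 1)))

/-- `r` encodes an integer cut vector `r₀ = 0 < r₁ < … < r_m = n`. -/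
def CutVec (n m : ℕ) (r : ℕ → ℕ) : Prop :=
  r 0 = 0 ∧ r m = n ∧ ∀ i < m, r i < r (i + 1)

/-- The number of indices `i ∈ {0, …, m-1}` (0-based version of `i ∈ {1, …, m}`) such that
`k p₁ ≤ r_{i+1} - r_i ≤ k p₂`. -/
def goodCount (k m : ℕ) (p₁ p₂ : ℝ) (r : ℕ → ℕ) : ℕ :=
  Set.ncard {i : ℕ | i < m ∧ (k : ℝ) * p₁ ≤ (r (i + 1) : ℝ) - (r i : ℝ) ∧
    (r (i + 1) : ℝ) - (r i : ℝ) ≤ (k : ℝ) * p₂}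

/-- The event `Aⁿ_{ε,p₁,p₂}` : every cut vector realizing the LCS as a sum of block scores has
at least `(1-ε) m` block lengths in `[k p₁, k p₂]`. -/
def eventA {Ω α : Type*} (X Y : ℕ → Ω → α) (n m k : ℕ) (ε p₁ p₂ : ℝ) : Set Ω :=
  {ω | ∀ r : ℕ → ℕ, CutVec n m r → Lr X Y k m r ω = LC X Y n ω →
    (1 - ε) * (m : ℝ) ≤ (goodCount k m p₁ p₂ r : ℝ)}

/-- `(L, I, J)` describes an optimal alignment of `X₁ … Xₙ` with `Y₁ … Yₙ`: the points
`(I l, J l)` for `l < L` are the (1-based) index pairs of aligned matching letters. -/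
def IsOptAlign {Ω α : Type*} (X Y : ℕ → Ω → α) (n : ℕ) (ω : Ω) (L : ℕ) (I J : ℕ → ℕ) : Prop :=
  L = LC X Y n ω ∧
  (∀ l < L, 1 ≤ I l ∧ I l ≤ n ∧ 1 ≤ J l ∧ J l ≤ n) ∧
  (∀ l, l + 1 < L → I l < I (l + 1) ∧ J l < J (l + 1)) ∧
  (∀ l < L, X (I l - 1) ω = Y (J l - 1) ω)

/-- Deterministic version of `IsOptAlign`. -/
def IsOptAlignD {α : Type*} (x y : ℕ → α) (n : ℕ) (L : ℕ) (I J : ℕ → ℕ) : Prop :=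
  L = LCd x y n ∧
  (∀ l < L, 1 ≤ I l ∧ I l ≤ n ∧ 1 ≤ J l ∧ J l ≤ n) ∧
  (∀ l, l + 1 < L → I l < I (l + 1) ∧ J l < J (l + 1)) ∧
  (∀ l < L, x (I l - 1) = y (J l - 1))

/-- The event `Dⁿ_{ε,p₁,p₂}` : every point of every optimal alignment lies above the line
`y = p₁ x - p₁ n ε - p₁ k` and below the line `y = (1/p₁) x + (1/p₁) n ε + (1/p₁) k`. -/
def eventD {Ω α : Type*} (X Y : ℕ → Ω → α) (n k : ℕ) (ε p₁ : ℝ) : Set Ω :=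
  {ω | ∀ L I J, IsOptAlign X Y n ω L I J → ∀ l < L,
    p₁ * (I l : ℝ) - p₁ * (n : ℝ) * ε - p₁ * (k : ℝ) ≤ (J l : ℝ) ∧
    (J l : ℝ) ≤ (1 / p₁) * (I l : ℝ) + (1 / p₁) * (n : ℝ) * ε + (1 / p₁) * (k : ℝ)}

/-- The natural-base entropy function. -/
def He (x : ℝ) : ℝ := -x * Real.log x - (1 - x) * Real.log (1 - x)

/-- The event `Bⁿ_Pp(ε)` : for every optimal cut vector, at least `(1-ε) m` of the `m` aligned
string pairs satisfy the property `Pp`. -/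
def eventB {Ω α : Type*} (X Y : ℕ → Ω → α) (n m k : ℕ)
    (Pp : List α → List α → Prop) (ε : ℝ) : Set Ω :=
  {ω | ∀ r : ℕ → ℕ, CutVec n m r → Lr X Y k m r ω = LC X Y n ω →
    (1 - ε) * (m : ℝ) ≤
      (Set.ncard {i : ℕ | i < m ∧
        Pp (seg X (k * i) (k * (i + 1)) ω) (seg Y (r i) (r (i + 1)) ω)} : ℝ)}

/-- For a fixed cut vector `r`, the set of indices `i` whose block length `r_{i+1} - r_i` lies in
`[k p₁, k p₂]` but whose aligned string pair does not satisfy the property `Pp`. -/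
def badIdx {Ω α : Type*} (X Y : ℕ → Ω → α) (k m : ℕ) (p₁ p₂ : ℝ)
    (Pp : List α → List α → Prop) (r : ℕ → ℕ) (ω : Ω) : Set ℕ :=
  {i | i < m ∧ ((k : ℝ) * p₁ ≤ (r (i + 1) : ℝ) - (r i : ℝ) ∧
      (r (i + 1) : ℝ) - (r i : ℝ) ≤ (k : ℝ) * p₂) ∧
    ¬ Pp (seg X (k * i) (k * (i + 1)) ω) (seg Y (r i) (r (i + 1)) ω)}

/-- `X` and `Y` are independent sequences of i.i.d. `μ`-distributed letters (the whole family
`X₁, X₂, …, Y₁, Y₂, …` is independent, each letter with law `μ`). -/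
def IID {Ω α : Type*} [MeasurableSpace Ω] [MeasurableSpace α]
    (P : Measure Ω) (X Y : ℕ → Ω → α) (μ : Measure α) : Prop :=
  (∀ i : ℕ ⊕ ℕ, Measurable (Sum.elim X Y i)) ∧
  iIndepFun (Sum.elim X Y) P ∧
  (∀ i : ℕ ⊕ ℕ, P.map (Sum.elim X Y i) = μ)

open Finset

theorem StrictMono.succ_le_of_castSucc_lt {α : Type*} [LinearOrder α] {m : ℕ}
    {r : Fin (m + 1) → α} (hr : StrictMono r) {i i' : Fin m}
    (h : r i.castSucc < r i'.succ) : r i.succ ≤ r i'.succ := by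
  by_contra! hlt
  have hi : i' < i := Fin.succ_lt_succ_iff.mp (hr.lt_iff_lt.mp hlt)
  exact (hr.monotone (Fin.succ_le_castSucc_iff.mpr hi)).not_gt h

section CutVectors

variable {m : ℕ}

def exceptionalBlocks (G : Finset ℕ) (r : Fin (m + 1) → ℕ) : Finset (Fin m) :=
  {i | r i.succ - r i.castSucc ∉ G}

def cutCode (g₀ : ℕ) (S : Finset (Fin m)) (r : Fin (m + 1) → ℕ) : (Fin m → ℕ) × Finset ℕ :=
  (fun i => if i ∈ S then g₀ else r i.succ - r i.castSucc, S.image fun i => r i.succ)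

theorem cutCode_injective {g₀ : ℕ} {S : Finset (Fin m)} {r r' : Fin (m + 1) → ℕ}
    (hr : StrictMono r) (hr' : StrictMono r') (h0 : r 0 = r' 0)
    (h : cutCode g₀ S r = cutCode g₀ S r') : r = r' := by
  simp only [cutCode, Prod.mk.injEq] at h
  obtain ⟨hlen, hends⟩ := h
  have endpoint_le : ∀ {r r' : Fin (m + 1) → ℕ}, StrictMono r → StrictMono r' →
      S.image (fun i => r i.succ) = S.image (fun i => r' i.succ) →
      ∀ i ∈ S, r i.castSucc = r' i.castSucc → r i.succ ≤ r' i.succ := by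
    intro r r' hr hr' hends i hi hi0
    obtain ⟨i', -, hi'⟩ := mem_image.mp (hends ▸ mem_image_of_mem (fun i : Fin m => r' i.succ) hi)
    rw [← hi']
    exact hr.succ_le_of_castSucc_lt (hi0 ▸ hi' ▸ hr' (Fin.castSucc_lt_succ (i := i)))
  funext t
  induction t using Fin.induction with
  | zero => exact h0
  | succ i ih =>
    by_cases hi : i ∈ S
    · exact (endpoint_le hr hr' hends i hi ih).antisymm (endpoint_le hr' hr hends.symm i hi ih.symm)
    · have hlen_i := congrFun hlen i
      simp only [hi, if_false] at hlen_i
      have := hr (Fin.castSucc_lt_succ (i := i))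
      have := hr' (Fin.castSucc_lt_succ (i := i))
      omega

theorem cutCode_mem {n j g₀ : ℕ} {G : Finset ℕ} (hg₀ : g₀ ∈ G) {S : Finset (Fin m)}
    (hS : #S = j) {r : Fin (m + 1) → ℕ} (h0 : r 0 = 0) (hlast : r (Fin.last m) = n)
    (hr : StrictMono r) (hbad : exceptionalBlocks G r ⊆ S) :
    cutCode g₀ S r ∈ Fintype.piFinset (fun _ => G) ×ˢ (Icc 1 n).powersetCard j := by
  refine mem_product.mpr ⟨Fintype.mem_piFinset.mpr fun i => ?_, mem_powersetCard.mpr ⟨?_, ?_⟩⟩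
  · by_cases hi : i ∈ S
    · simpa [cutCode, hi] using hg₀
    · have hgood : i ∉ exceptionalBlocks G r := fun h => hi (hbad h)
      simpa [cutCode, exceptionalBlocks, hi] using hgood
  · intro x hx
    obtain ⟨i, -, rfl⟩ := mem_image.mp hx
    have h1 : r 0 < r i.succ := hr (Fin.succ_pos i)
    have h2 : r i.succ ≤ r (Fin.last m) := hr.monotone (Fin.le_last _)
    simp only [mem_Icc]
    omega
  · exact (card_image_of_injective _ (hr.injective.comp (Fin.succ_injective m))).trans hS

theorem ncard_le_of_forall_cutVector {n j : ℕ} (hj : j ≤ m) {G : Finset ℕ} (hG : G.Nonempty)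
    {R : Set (Fin (m + 1) → ℕ)}
    (hR : ∀ r ∈ R, r 0 = 0 ∧ r (Fin.last m) = n ∧ StrictMono r ∧
      #(exceptionalBlocks G r) ≤ j) :
    R.ncard ≤ m.choose j * #G ^ m * n.choose j := by
  classical
  obtain ⟨g₀, hg₀⟩ := hG
  have hS : ∀ r ∈ R, ∃ S : Finset (Fin m), exceptionalBlocks G r ⊆ S ∧ #S = j :=
    fun r hr => by
      obtain ⟨S, hbad, -, hS⟩ := exists_subsuperset_card_eq
        (subset_univ (exceptionalBlocks G r)) (hR r hr).2.2.2 (by simpa using hj)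
      exact ⟨S, hbad, hS⟩
  choose! S hbad hSj using hS
  let A := (univ : Finset (Fin m)).powersetCard j ×ˢ
    (Fintype.piFinset (fun _ : Fin m => G) ×ˢ (Icc 1 n).powersetCard j)
  calc R.ncard ≤ (A : Set (Finset (Fin m) × (Fin m → ℕ) × Finset ℕ)).ncard := by
        refine Set.ncard_le_ncard_of_injOn (fun r => (S r, cutCode g₀ (S r) r)) ?_ ?_
        · intro r hr
          obtain ⟨h0, hlast, hmono, -⟩ := hR r hr
          change (S r, cutCode g₀ (S r) r) ∈ A
          exact mem_product.mpr ⟨mem_powersetCard.mpr ⟨subset_univ _, hSj r hr⟩,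
            cutCode_mem hg₀ (hSj r hr) h0 hlast hmono (hbad r hr)⟩
        · intro r hr r' hr' h
          obtain ⟨hS, hcode⟩ := Prod.mk.inj h
          obtain ⟨h0, -, hmono, -⟩ := hR r hr
          obtain ⟨h0', -, hmono', -⟩ := hR r' hr'
          exact cutCode_injective hmono hmono' (h0.trans h0'.symm) (hS ▸ hcode)
    _ = m.choose j * #G ^ m * n.choose j := by
        rw [Set.ncard_coe_finset]
        simp [A, mul_assoc]

end CutVectors

theorem Nat.card_Icc_ceil_floor_le (x y : ℝ) : #(Icc ⌈x⌉₊ ⌊y⌋₊) ≤ ⌊y - x⌋₊ + 1 := by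
  rw [Nat.card_Icc]
  rcases le_or_gt ⌊y⌋₊ ⌈x⌉₊ with h | h
  · omega
  · have hy : 0 ≤ y := by
      by_contra! hy
      simp [Nat.floor_of_nonpos hy.le] at h
    have : ⌊y⌋₊ - ⌈x⌉₊ ≤ ⌊y - x⌋₊ := Nat.le_floor <| by
      rw [Nat.cast_sub h.le]
      linarith [Nat.floor_le hy, Nat.le_ceil x]
    omega

theorem Nat.choose_le_exp_one_mul_div_pow (n j : ℕ) :
    (n.choose j : ℝ) ≤ (Real.exp 1 * n / j) ^ j := by
  have hfact : (0 : ℝ) < j.factorial := mod_cast j.factorial_pos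
  have hpow : (0 : ℝ) < (j : ℝ) ^ j := by
    rcases j.eq_zero_or_pos with rfl | hj
    · simp
    · positivity
  have hfact_ge : (j : ℝ) ^ j ≤ Real.exp j * j.factorial :=
    (div_le_iff₀ hfact).mp (Real.pow_div_factorial_le_exp _ j.cast_nonneg j)
  calc (n.choose j : ℝ) ≤ n ^ j / j.factorial := Nat.choose_le_pow_div j n
    _ ≤ n ^ j * (Real.exp j / j ^ j) := by
        rw [← mul_one_div]
        refine mul_le_mul_of_nonneg_left ?_ (by positivity)
        rwa [div_le_div_iff₀ hfact hpow, one_mul]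
    _ = (Real.exp 1 * n / j) ^ j := by
        rw [div_pow, mul_pow, Real.exp_one_pow]
        ring

theorem Nat.choose_le_exp_He_pow {m j : ℕ} {ε : ℝ} (hε0 : 0 < ε) (hε1 : ε < 1)
    (hj : (j : ℝ) = ε * m) : (m.choose j : ℝ) ≤ Real.exp (He ε) ^ m := by
  have hjm : j ≤ m := by exact_mod_cast (by nlinarith : (j : ℝ) ≤ m)
  have hε1' : 0 < 1 - ε := by linarith
  have hterm : (m.choose j : ℝ) * (ε ^ j * (1 - ε) ^ (m - j)) ≤ 1 := by
    calc (m.choose j : ℝ) * (ε ^ j * (1 - ε) ^ (m - j))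
        = ε ^ j * (1 - ε) ^ (m - j) * m.choose j := mul_comm _ _
      _ ≤ ∑ i ∈ range (m + 1), ε ^ i * (1 - ε) ^ (m - i) * m.choose i :=
        single_le_sum (f := fun i => ε ^ i * (1 - ε) ^ (m - i) * (m.choose i : ℝ))
          (fun i _ => by positivity) (mem_range.mpr (Nat.lt_succ_of_le hjm))
      _ = 1 := by rw [← add_pow, add_sub_cancel, one_pow]
  have hweight : ε ^ j * (1 - ε) ^ (m - j) = (Real.exp (He ε) ^ m)⁻¹ := by
    rw [← Real.rpow_natCast ε, ← Real.rpow_natCast (1 - ε), Real.rpow_def_of_pos hε0,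
      Real.rpow_def_of_pos hε1', ← Real.exp_add, ← Real.exp_nat_mul, ← Real.exp_neg,
      Nat.cast_sub hjm, hj, He]
    ring_nf
  rwa [hweight, ← div_eq_mul_inv, div_le_one (by positivity)] at hterm

theorem Nat.choose_mul_le_rpow_pow {m k j : ℕ} {ε : ℝ} (hε : 0 < ε) (hj : (j : ℝ) = ε * m) :
    ((m * k).choose j : ℝ) ≤ ((Real.exp 1 * k / ε) ^ ε) ^ m := by
  rcases m.eq_zero_or_pos with rfl | hm
  · obtain rfl : j = 0 := by simpa using hj
    simp
  have hratio : Real.exp 1 * (m * k : ℕ) / j = Real.exp 1 * k / ε := by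
    rw [hj]
    push_cast
    field_simp
  calc ((m * k).choose j : ℝ) ≤ (Real.exp 1 * (m * k : ℕ) / j) ^ j :=
        Nat.choose_le_exp_one_mul_div_pow _ _
    _ = ((Real.exp 1 * k / ε) ^ ε) ^ m := by
        rw [hratio, ← Real.rpow_natCast, hj, Real.rpow_mul_natCast (by positivity)]

theorem card_exceptionalBlocks_le {m j : ℕ} {x y ε : ℝ} (hj : (j : ℝ) = ε * m)
    {r : Fin (m + 1) → ℕ} (hr : Monotone r)
    (hgood : (1 - ε) * m ≤ ({i : Fin m | x ≤ (r i.succ : ℝ) - r i.castSucc ∧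
      (r i.succ : ℝ) - r i.castSucc ≤ y}.ncard : ℝ)) :
    #(exceptionalBlocks (Icc ⌈x⌉₊ ⌊y⌋₊) r) ≤ j := by
  set E := exceptionalBlocks (Icc ⌈x⌉₊ ⌊y⌋₊) r
  have hsub : {i : Fin m | x ≤ (r i.succ : ℝ) - r i.castSucc ∧
      (r i.succ : ℝ) - r i.castSucc ≤ y} ⊆ ↑Eᶜ := by
    rintro i ⟨hx, hy⟩
    rw [← Nat.cast_sub (hr (Fin.castSucc_le_succ i))] at hx hy
    have hmem : r i.succ - r i.castSucc ∈ Icc ⌈x⌉₊ ⌊y⌋₊ :=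
      mem_Icc.mpr ⟨Nat.ceil_le.mpr hx, Nat.le_floor hy⟩
    simpa [E, exceptionalBlocks] using hmem
  have hcompl : (#Eᶜ : ℝ) = m - #E := by
    rw [card_compl, Fintype.card_fin,
      Nat.cast_sub (card_le_univ E |>.trans_eq (Fintype.card_fin m))]
  have hgood_le := (Nat.cast_le (α := ℝ)).mpr
    ((Set.ncard_le_ncard hsub).trans_eq (Set.ncard_coe_finset _))
  exact_mod_cast (by linarith : (#E : ℝ) ≤ j)

theorem card_R_le_general
    (n m k : ℕ) (hn : n = m * k)
    (p₁ p₂ ε : ℝ) (hp₁1 : p₁ < 1) (hp₂ : 1 < p₂)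
    (hε0 : 0 < ε) (hε1 : ε < 1)
    (j : ℕ) (hjm : (j : ℝ) = ε * (m : ℝ)) :
    (Set.ncard {r : Fin (m + 1) → ℕ | r 0 = 0 ∧ r (Fin.last m) = n ∧ StrictMono r ∧
        (1 - ε) * (m : ℝ) ≤
          (Set.ncard {i : Fin m | (k : ℝ) * p₁ ≤ (r i.succ : ℝ) - (r i.castSucc : ℝ) ∧
            (r i.succ : ℝ) - (r i.castSucc : ℝ) ≤ (k : ℝ) * p₂} : ℝ)} : ℝ) ≤
      (((⌊(p₂ - p₁) * (k : ℝ)⌋₊ : ℝ) + 1) * (Real.exp 1 * (k : ℝ) / ε) ^ ε *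
        Real.exp (He ε)) ^ m := by
  subst hn
  have hj : j ≤ m := by exact_mod_cast (by nlinarith : (j : ℝ) ≤ m)
  set G := Icc ⌈(k : ℝ) * p₁⌉₊ ⌊(k : ℝ) * p₂⌋₊
  have hkG : k ∈ G := mem_Icc.mpr ⟨Nat.ceil_le.mpr (by nlinarith), Nat.le_floor (by nlinarith)⟩
  have hcardG : #G ≤ ⌊(p₂ - p₁) * (k : ℝ)⌋₊ + 1 := by
    have := Nat.card_Icc_ceil_floor_le ((k : ℝ) * p₁) (k * p₂)
    rwa [show (k : ℝ) * p₂ - k * p₁ = (p₂ - p₁) * k by ring] at this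
  calc _ ≤ ((m.choose j * #G ^ m * (m * k).choose j : ℕ) : ℝ) :=
        Nat.cast_le.mpr <| ncard_le_of_forall_cutVector hj ⟨k, hkG⟩ <| by
          rintro r ⟨h0, hlast, hr, hgood⟩
          exact ⟨h0, hlast, hr, card_exceptionalBlocks_le hjm hr.monotone hgood⟩
    _ ≤ Real.exp (He ε) ^ m * ((⌊(p₂ - p₁) * (k : ℝ)⌋₊ : ℝ) + 1) ^ m *
        ((Real.exp 1 * k / ε) ^ ε) ^ m := by
      push_cast
      gcongr
      · exact Nat.choose_le_exp_He_pow hε0 hε1 hjm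
      · exact_mod_cast hcardG
      · exact Nat.choose_mul_le_rpow_pow hε0 hjm
    _ = _ := by rw [mul_pow, mul_pow]; ring

/-- improved counting bound (goodboundR) of the paper. -/
theorem card_R_le
    (n m k : ℕ) (hm : 1 ≤ m) (hk : 1 ≤ k) (hn : n = m * k)
    (p₁ p₂ ε : ℝ) (hp₁0 : 0 < p₁) (hp₁1 : p₁ < 1) (hp₂ : 1 < p₂)
    (hε0 : 0 < ε) (hε1 : ε < 1)
    (j : ℕ) (hj : 0 < j) (hjm : (j : ℝ) = ε * (m : ℝ)) :
    (Set.ncard {r : Fin (m + 1) → ℕ | r 0 = 0 ∧ r (Fin.last m) = n ∧ StrictMono r ∧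
        (1 - ε) * (m : ℝ) ≤
          (Set.ncard {i : Fin m | (k : ℝ) * p₁ ≤ (r i.succ : ℝ) - (r i.castSucc : ℝ) ∧
            (r i.succ : ℝ) - (r i.castSucc : ℝ) ≤ (k : ℝ) * p₂} : ℝ)} : ℝ) ≤
      (((⌊(p₂ - p₁) * (k : ℝ)⌋₊ : ℝ) + 1) * (Real.exp 1 * (k : ℝ) / ε) ^ ε *
        Real.exp (He ε)) ^ m :=
  card_R_le_general n m k hn p₁ p₂ ε hp₁1 hp₂ hε0 hε1 j hjm

end
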